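/- There is no linear map ℓ : C∞₂π(ℝ,ℂ) → ℂ such that ∫₀^{2π} f·g‴ dx = ℓ(f·g′ − f′·g) for all f, g ∈ C∞₂π(ℝ,ℂ). In other words, the Gelfand–Fuchs 2-cocycle μ(f,g) = ∫₀^{2π} f·g‴ dx on Vect(S¹) is not a coboundary, so the central extension of Vect(S¹) it defines (the Virasoro algebra) is non-trivial. -/
import Mathlib


open Real intervalIntegral
open scoped ContDiff

noncomputable section

/-- The space `C∞₂π(ℝ,ℂ)` of smooth `2π`-periodic functions `ℝ → ℂ`
(identified with `Vect(S¹)`, `f` representing the vector field `f·d/dx`),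
as a `ℂ`-submodule of `ℝ → ℂ`. -/
def SmoothPeriodic : Submodule ℂ (ℝ → ℂ) where
  carrier := {f | ContDiff ℝ ∞ f ∧ Function.Periodic f (2 * π)}
  add_mem' hf hg := ⟨hf.1.add hg.1, hf.2.add hg.2⟩
  zero_mem' := ⟨contDiff_const, fun _ => rfl⟩
  smul_mem' c f hf := ⟨hf.1.const_smul c, hf.2.smul c⟩

lemma mem_smoothPeriodic_iff {f : ℝ → ℂ} :
    f ∈ SmoothPeriodic ↔ ContDiff ℝ ∞ f ∧ Function.Periodic f (2 * π) := Iff.rfl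

lemma SmoothPeriodic.periodic_deriv {f : ℝ → ℂ} (hf : Function.Periodic f (2 * π)) :
    Function.Periodic (deriv f) (2 * π) := fun x => by
  rw [← deriv_comp_add_const]
  congr 1
  funext t
  exact hf t

/-- The Lie bracket `[f,g] = f·g′ − f′·g` of vector fields on `S¹`. -/
def vectBracket (f g : SmoothPeriodic) : SmoothPeriodic :=
  ⟨fun x => (f : ℝ → ℂ) x * deriv (g : ℝ → ℂ) x - deriv (f : ℝ → ℂ) x * (g : ℝ → ℂ) x, by
    obtain ⟨hfs, hfp⟩ := f.2
    obtain ⟨hgs, hgp⟩ := g.2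
    exact ⟨(hfs.mul (contDiff_infty_iff_deriv.mp hgs).2).sub
        ((contDiff_infty_iff_deriv.mp hfs).2.mul hgs),
      (hfp.mul (SmoothPeriodic.periodic_deriv hgp)).sub
        ((SmoothPeriodic.periodic_deriv hfp).mul hgp)⟩⟩

lemma hasDerivAt_cexp_mul (c : ℂ) (x : ℝ) :
    HasDerivAt (fun t : ℝ => Complex.exp (c * t)) (c * Complex.exp (c * x)) x := by
  have h : HasDerivAt (fun t : ℝ => c * (t : ℂ)) c x := by
    simpa using (Complex.ofRealCLM.hasDerivAt (x := x)).const_mul c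
  simpa [mul_comm] using h.cexp

lemma deriv_cexp_mul (c : ℂ) (x : ℝ) :
    deriv (fun t : ℝ => Complex.exp (c * t)) x = c * Complex.exp (c * x) :=
  (hasDerivAt_cexp_mul c x).deriv

lemma deriv3_cexp_mul (c : ℂ) :
    deriv (deriv (deriv (fun t : ℝ => Complex.exp (c * t))))
      = fun x : ℝ => c ^ 3 * Complex.exp (c * x) := by
  have h1 : deriv (fun t : ℝ => Complex.exp (c * t))
      = fun t : ℝ => c * Complex.exp (c * t) := funext (deriv_cexp_mul c)
  rw [h1]
  have h2 : deriv (fun t : ℝ => c * Complex.exp (c * t))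
      = fun t : ℝ => c * (c * Complex.exp (c * t)) := by
    funext x
    rw [deriv_const_mul_field, deriv_cexp_mul]
  rw [h2]
  funext x
  rw [deriv_const_mul_field, deriv_const_mul_field, deriv_cexp_mul]
  ring

lemma mem_exp (n : ℤ) :
    (fun t : ℝ => Complex.exp ((n : ℂ) * Complex.I * t)) ∈ SmoothPeriodic := by
  refine ⟨?_, ?_⟩
  · have hexp : ContDiff ℝ ∞ Complex.exp := Complex.contDiff_exp
    exact hexp.comp (contDiff_const.mul Complex.ofRealCLM.contDiff)
  · intro x
    simp only
    rw [Complex.ofReal_add, mul_add, Complex.exp_add]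
    have h : (n : ℂ) * Complex.I * ((2 * π : ℝ) : ℂ) = n * (2 * π * Complex.I) := by
      push_cast; ring
    rw [h, Complex.exp_int_mul_two_pi_mul_I, mul_one]

lemma exp_mul_exp_neg (a : ℂ) (x : ℝ) :
    Complex.exp (a * x) * Complex.exp (-a * x) = 1 := by
  rw [← Complex.exp_add, show a * x + -a * x = 0 by ring, Complex.exp_zero]

/-- **The Gelfand–Fuchs cocycle is not a coboundary.**
There is no linear map `ℓ : C∞₂π(ℝ,ℂ) → ℂ` with
`∫₀^{2π} f·g‴ dx = ℓ(f·g′ − f′·g)` for all `f, g`; hence the central extension of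
`Vect(S¹)` defined by the Gelfand–Fuchs 2-cocycle (the Virasoro algebra) is non-trivial. -/
theorem gelfandFuchs_cocycle_not_coboundary :
    ¬ ∃ ℓ : SmoothPeriodic →ₗ[ℂ] ℂ, ∀ f g : SmoothPeriodic,
      (∫ x in (0:ℝ)..(2 * π), (f : ℝ → ℂ) x * deriv (deriv (deriv (g : ℝ → ℂ))) x)
        = ℓ (vectBracket f g) := by
  rintro ⟨ℓ, h⟩
  set f₁ : SmoothPeriodic := ⟨_, mem_exp 1⟩ with hf₁
  set g₁ : SmoothPeriodic := ⟨_, mem_exp (-1)⟩ with hg₁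
  set f₂ : SmoothPeriodic := ⟨_, mem_exp 2⟩ with hf₂
  set g₂ : SmoothPeriodic := ⟨_, mem_exp (-2)⟩ with hg₂
  -- the brackets are the constant functions -2i and -4i, hence proportional
  have hbr : vectBracket f₂ g₂ = (2 : ℂ) • vectBracket f₁ g₁ := by
    apply Subtype.ext
    funext x
    show _ - _ = (2 : ℂ) * (_ - _)
    simp only [hf₁, hg₁, hf₂, hg₂, deriv_cexp_mul]
    push_cast
    have e1 := exp_mul_exp_neg (Complex.I) x
    have e2 := exp_mul_exp_neg (2 * Complex.I) x
    ring_nf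
    ring_nf at e1 e2
    linear_combination (-4 * Complex.I) * e2 + (4 * Complex.I) * e1
  -- compute the two integrals
  have hint : ∀ n : ℤ, n ≠ 0 →
      (∫ x in (0:ℝ)..(2 * π),
        Complex.exp ((n : ℂ) * Complex.I * x)
          * deriv (deriv (deriv (fun t : ℝ => Complex.exp ((-n : ℂ) * Complex.I * t)))) x)
        = (2 * π : ℝ) • ((n : ℂ) ^ 3 * Complex.I) := by
    intro n hn
    have h3 := deriv3_cexp_mul ((-n : ℂ) * Complex.I)
    rw [h3]
    have : ∀ x : ℝ, Complex.exp ((n : ℂ) * Complex.I * x)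
        * (((-n : ℂ) * Complex.I) ^ 3 * Complex.exp ((-n : ℂ) * Complex.I * x))
        = (n : ℂ) ^ 3 * Complex.I := by
      intro x
      have e := exp_mul_exp_neg ((n : ℂ) * Complex.I) x
      have : Complex.exp ((n : ℂ) * Complex.I * x) * Complex.exp ((-n : ℂ) * Complex.I * x) = 1 := by
        simpa [show (-n : ℂ) * Complex.I = -((n:ℂ) * Complex.I) by ring] using e
      calc Complex.exp ((n : ℂ) * Complex.I * x)
            * (((-n : ℂ) * Complex.I) ^ 3 * Complex.exp ((-n : ℂ) * Complex.I * x))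
          = (Complex.exp ((n : ℂ) * Complex.I * x)
              * Complex.exp ((-n : ℂ) * Complex.I * x)) * ((-n : ℂ) * Complex.I) ^ 3 := by ring
        _ = ((-n : ℂ) * Complex.I) ^ 3 := by rw [this, one_mul]
        _ = (n : ℂ) ^ 3 * Complex.I := by
            rw [mul_pow, show (Complex.I) ^ 3 = -Complex.I by
              rw [pow_succ, Complex.I_sq]; ring]
            ring
    rw [intervalIntegral.integral_congr (fun x _ => this x), intervalIntegral.integral_const]
    norm_num
  have h1 := h f₁ g₁
  have h2 := h f₂ g₂
  have hi1 : (∫ x in (0:ℝ)..(2 * π), (f₁ : ℝ → ℂ) x * deriv (deriv (deriv (g₁ : ℝ → ℂ))) x)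
      = (2 * π : ℝ) • ((1 : ℂ) ^ 3 * Complex.I) := by
    have := hint 1 one_ne_zero
    simpa [hf₁, hg₁] using this
  have hi2 : (∫ x in (0:ℝ)..(2 * π), (f₂ : ℝ → ℂ) x * deriv (deriv (deriv (g₂ : ℝ → ℂ))) x)
      = (2 * π : ℝ) • ((2 : ℂ) ^ 3 * Complex.I) := by
    have := hint 2 two_ne_zero
    simpa [hf₂, hg₂] using this
  rw [hi1] at h1
  rw [hi2, hbr, map_smul] at h2
  rw [← h1] at h2
  -- h2 : 16 π i = 4 π i, contradiction
  have hπ : (π : ℂ) ≠ 0 := by exact_mod_cast Real.pi_ne_zero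
  have : ((2 * π : ℝ) : ℂ) * ((2 : ℂ) ^ 3 * Complex.I)
      = 2 * (((2 * π : ℝ) : ℂ) * ((1 : ℂ) ^ 3 * Complex.I)) := by
    simpa [Complex.real_smul] using h2
  apply Complex.I_ne_zero
  have h16 : (16 : ℂ) * π * Complex.I = 4 * π * Complex.I := by
    push_cast at this
    linear_combination this
  have h12 : (12 : ℂ) * π * Complex.I = 0 := by linear_combination h16
  have := mul_eq_zero.mp h12
  rcases this with hh | hh
  · rcases mul_eq_zero.mp hh with hh' | hh'
    · norm_num at hh'
    · exact absurd hh' hπ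
  · exact hh
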